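/- For every run u of the Minsky machine A there exists a finite word w such that w satisfies ψ_Minsky := ψ_enc-basics ∧ ψ_P3 ∧ ψ_P4 and run(w) = u. -/

import Mathlib

/- STATEMENT 15: Every run of the Minsky machine is encoded by some model of ψ_Minsky. -/

namespace Minsky15

abbrev Word := List (Set ℕ)

inductive Formula where
  | atom (a : ℕ)
  | neg (φ : Formula)
  | conj (φ ψ : Formula)
  | fut (φ : Formula)
  | half (φ : Formula)

def Sat (w : Word) : ℕ → Formula → Prop
  | i, .atom a => a ∈ w.getD i ∅
  | i, .neg φ => ¬ Sat w i φ
  | i, .conj φ ψ => Sat w i φ ∧ Sat w i ψ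
  | i, .fut φ => ∃ j, i ≤ j ∧ j < w.length ∧ Sat w j φ
  | i, .half φ => 2 * Set.ncard {j | j < i ∧ Sat w j φ} = i

def fdisj (φ ψ : Formula) : Formula := .neg (.conj (.neg φ) (.neg ψ))
def fimpl (φ ψ : Formula) : Formula := fdisj (.neg φ) ψ
def fiff (φ ψ : Formula) : Formula := .conj (fimpl φ ψ) (fimpl ψ φ)
def G (φ : Formula) : Formula := .neg (.fut (.neg φ))
def ftop : Formula := .neg (.conj (.atom 0) (.neg (.atom 0)))
def fbot : Formula := .conj (.atom 0) (.neg (.atom 0))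
def bigConj (l : List Formula) : Formula := l.foldr .conj ftop
def bigDisj (l : List Formula) : Formula := l.foldr fdisj fbot

def φinit (wht shdw : ℕ) : Formula :=
  .conj (.atom wht)
    (.conj (G (fiff (.atom wht) (.neg (.atom shdw))))
           (G (fimpl (.atom wht) (.fut (.atom shdw)))))

/-- `ψ_shadowy`, defining shadowy words. -/
def ψshadowy (wht shdw : ℕ) : Formula :=
  .conj (φinit wht shdw) (G (fiff (.half (.atom wht)) (.atom wht)))

def φlast (shdw : ℕ) : Formula := G (.atom shdw)
def φstl (wht shdw : ℕ) : Formula := .conj (.atom wht) (G (fdisj (.atom wht) (φlast shdw)))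

/-- `φ_transfer^{σ,σ̃}`. -/
def φtransfer (wht shdw σ σt : ℕ) : Formula :=
  .conj (ψshadowy wht shdw)
    (.conj (G (fimpl (.atom σ) (.atom wht)))
      (.conj (G (fimpl (.atom σt) (.atom shdw)))
        (.conj (G (fimpl (.atom wht)
                    (.half (fdisj (.conj (.atom wht) (.atom σ))
                                  (.conj (.atom shdw) (.neg (.atom σt)))))))
               (fiff (.fut (.conj (φstl wht shdw) (.atom σ)))
                     (.fut (.conj (φlast shdw) (.atom σt)))))))

/-- Counter values: zero or positive. -/
inductive CV where
  | zero | plus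
deriving DecidableEq

/-- Counter operations: decrement, no-op, increment. -/
inductive Op where
  | dec | nop | inc
deriving DecidableEq

def opVal : Op → ℤ
  | .dec => -1
  | .nop => 0
  | .inc => 1

/-- A deterministic Minsky machine with state space `Q`. -/
structure Minsky (Q : Type) where
  q0 : Q
  δ : Q → CV → CV → Op × Op × Q
  dec_fst : ∀ q f s, (δ q f s).1 = Op.dec → f = CV.plus
  dec_snd : ∀ q f s, (δ q f s).2.1 = Op.dec → s = CV.plus
  ne_self : ∀ q f s, (δ q f s).2.2 ≠ q
  ne_init : ∀ q f s, (δ q f s).2.2 ≠ q0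

/-- A letter of a run: `(q, f, s, f̄, s̄, q_N)`. -/
structure Config (Q : Type) where
  q : Q
  f : CV
  s : CV
  fo : Op
  so : Op
  qn : Q

variable {Q : Type}

def dflt (M : Minsky Q) : Config Q := ⟨M.q0, CV.zero, CV.zero, Op.nop, Op.nop, M.q0⟩

/-- (P1) the run starts in the initial state with both counters empty. -/
def P1 (M : Minsky Q) (u : List (Config Q)) : Prop :=
  (u.getD 0 (dflt M)).q = M.q0 ∧ (u.getD 0 (dflt M)).f = CV.zero ∧
    (u.getD 0 (dflt M)).s = CV.zero

/-- (P2) every letter is consistent with the transition function. -/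
def P2 (M : Minsky Q) (u : List (Config Q)) : Prop :=
  ∀ i < u.length,
    M.δ (u.getD i (dflt M)).q (u.getD i (dflt M)).f (u.getD i (dflt M)).s =
      ((u.getD i (dflt M)).fo, (u.getD i (dflt M)).so, (u.getD i (dflt M)).qn)

/-- (P3) the target state of each letter is the source state of the next one. -/
def P3 (M : Minsky Q) (u : List (Config Q)) : Prop :=
  ∀ i, i + 1 < u.length → (u.getD i (dflt M)).qn = (u.getD (i + 1) (dflt M)).q

/-- (P4) the zero/positive flags are consistent with the accumulated operations. -/
def P4 (M : Minsky Q) (u : List (Config Q)) : Prop :=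
  ∀ i < u.length,
    ((u.getD i (dflt M)).f = CV.zero ↔
      (∑ j ∈ Finset.range i, opVal (u.getD j (dflt M)).fo) = 0) ∧
    ((u.getD i (dflt M)).s = CV.zero ↔
      (∑ j ∈ Finset.range i, opVal (u.getD j (dflt M)).so) = 0)

/-- A run of the Minsky machine `M`. -/
def IsRun (M : Minsky Q) (u : List (Config Q)) : Prop :=
  u ≠ [] ∧ P1 M u ∧ P2 M u ∧ P3 M u ∧ P4 M u

/-- Tags for the letters of the alphabet Σ_M. -/
inductive Tag (Q : Type) where
  | fr (q : Q)
  | to (q : Q)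
  | c1 (c : CV)
  | c2 (c : CV)
  | i1 (o : Op)
  | i2 (o : Op)

/-- An assignment of pairwise distinct atomic propositions to `wht`, `shdw`, the
letters of Σ_M, together with an injective map `σ ↦ σ̃` into fresh letters. -/
structure Letters (Q : Type) where
  wht : ℕ
  shdw : ℕ
  ltr : Tag Q → ℕ
  tilde : ℕ → ℕ
  wht_ne_shdw : wht ≠ shdw
  ltr_inj : Function.Injective ltr
  ltr_ne_wht : ∀ t, ltr t ≠ wht
  ltr_ne_shdw : ∀ t, ltr t ≠ shdw
  tilde_inj : ∀ t t', tilde (ltr t) = tilde (ltr t') → ltr t = ltr t'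
  tilde_ne_ltr : ∀ t t', tilde (ltr t) ≠ ltr t'
  tilde_ne_wht : ∀ t, tilde (ltr t) ≠ wht
  tilde_ne_shdw : ∀ t, tilde (ltr t) ≠ shdw

def cvList : List CV := [CV.zero, CV.plus]
def opList : List Op := [Op.dec, Op.nop, Op.inc]

/-- The list of all tags (Σ_M up to the letter assignment). -/
noncomputable def tagList (Q : Type) [Fintype Q] : List (Tag Q) :=
  (Finset.univ.toList (α := Q)).map Tag.fr ++
  (Finset.univ.toList (α := Q)).map Tag.to ++
  cvList.map Tag.c1 ++ cvList.map Tag.c2 ++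
  opList.map Tag.i1 ++ opList.map Tag.i2

/-- The alphabet Σ_M, as a list of atomic propositions. -/
noncomputable def SigMlist [Fintype Q] (L : Letters Q) : List ℕ := (tagList Q).map L.ltr

/-- `ψ^{truly-Σ_M}_shadowy`. -/
noncomputable def ψtruly [Fintype Q] (L : Letters Q) : Formula :=
  bigConj (ψshadowy L.wht L.shdw ::
    (SigMlist L).map (fun σ => φtransfer L.wht L.shdw σ (L.tilde σ)))

/-- `ψ_P1 := from_{q0} ∧ c1_0 ∧ c2_0`. -/
def ψP1 (M : Minsky Q) (L : Letters Q) : Formula :=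
  .conj (.atom (L.ltr (Tag.fr M.q0)))
    (.conj (.atom (L.ltr (Tag.c1 CV.zero))) (.atom (L.ltr (Tag.c2 CV.zero))))

/-- The first conjunct of `ψ_P2`: every white position carries a transition of `δ`. -/
noncomputable def ψP2a [Fintype Q] (M : Minsky Q) (L : Letters Q) : Formula :=
  G (fimpl (.atom L.wht)
    (bigDisj ((Finset.univ.toList (α := Q)).flatMap (fun q =>
      cvList.flatMap (fun f => cvList.map (fun s =>
        bigConj [Formula.atom (L.ltr (Tag.fr q)),
                 Formula.atom (L.ltr (Tag.c1 f)),
                 Formula.atom (L.ltr (Tag.c2 s)),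
                 Formula.atom (L.ltr (Tag.i1 (M.δ q f s).1)),
                 Formula.atom (L.ltr (Tag.i2 (M.δ q f s).2.1)),
                 Formula.atom (L.ltr (Tag.to (M.δ q f s).2.2))]))))))

/-- The second conjunct of `ψ_P2`: no position carries seven pairwise different
letters of Σ_M. -/
noncomputable def ψP2b [Fintype Q] (L : Letters Q) : Formula :=
  G (bigConj ((((SigMlist L).sublistsLen 7).map
      (fun l => Formula.neg (bigConj (l.map Formula.atom))))))

noncomputable def ψencBasics [Fintype Q] (M : Minsky Q) (L : Letters Q) : Formula :=
  .conj (ψtruly L) (.conj (ψP1 M L) (.conj (ψP2a M L) (ψP2b L)))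

/-- `φ^=_{α,β} := Half([wht ∧ α] ∨ [shdw ∧ ¬β̃])`. -/
def φeq (L : Letters Q) (α β : ℕ) : Formula :=
  .half (fdisj (.conj (.atom L.wht) (.atom α))
               (.conj (.atom L.shdw) (.neg (.atom (L.tilde β)))))

/-- `ψ_P3`. -/
noncomputable def ψP3 [Fintype Q] [DecidableEq Q] (M : Minsky Q) (L : Letters Q) : Formula :=
  G (fimpl (.atom L.wht)
    (bigConj (((Finset.univ.toList (α := Q)).filter (fun q => decide (q ≠ M.q0))).map
      (fun q => fdisj (.atom (L.ltr (Tag.fr q)))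
                      (φeq L (L.ltr (Tag.fr q)) (L.ltr (Tag.to q)))))))

/-- `ψ_P4`. -/
def ψP4 (L : Letters Q) : Formula :=
  .conj (G (fimpl (.atom (L.ltr (Tag.c1 CV.zero)))
              (φeq L (L.ltr (Tag.i1 Op.inc)) (L.ltr (Tag.i1 Op.dec)))))
    (.conj (G (fimpl (.atom (L.ltr (Tag.c2 CV.zero)))
                (φeq L (L.ltr (Tag.i2 Op.inc)) (L.ltr (Tag.i2 Op.dec)))))
      (.conj (G (fimpl (.atom L.wht)
                  (fiff (.atom (L.ltr (Tag.c1 CV.zero)))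
                        (.neg (.atom (L.ltr (Tag.c1 CV.plus)))))))
             (G (fimpl (.atom L.wht)
                  (fiff (.atom (L.ltr (Tag.c2 CV.zero)))
                        (.neg (.atom (L.ltr (Tag.c2 CV.plus)))))))))

noncomputable def ψMinsky [Fintype Q] [DecidableEq Q] (M : Minsky Q) (L : Letters Q) : Formula :=
  .conj (ψencBasics M L) (.conj (ψP3 M L) (ψP4 L))

/-- The letter `c` is encoded at the set `s` (the label of a white position). -/
def Decodes (L : Letters Q) (c : Config Q) (s : Set ℕ) : Prop :=
  L.wht ∈ s ∧ L.ltr (Tag.fr c.q) ∈ s ∧ L.ltr (Tag.c1 c.f) ∈ s ∧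
  L.ltr (Tag.c2 c.s) ∈ s ∧ L.ltr (Tag.i1 c.fo) ∈ s ∧ L.ltr (Tag.i2 c.so) ∈ s ∧
  L.ltr (Tag.to c.qn) ∈ s

/-- `u = run(w)`: `u` has length `|w|/2` and its `i`-th letter is encoded at the
`i`-th white position of `w`. -/
def EncodesRun (L : Letters Q) (w : Word) (u : List (Config Q)) : Prop :=
  2 * u.length = w.length ∧
  ∀ i (h : i < u.length), Decodes L (u.get ⟨i, h⟩) (w.getD (2 * i) ∅)

/-
A run `u₀ … u_{n-1}` is encoded by the word of length `2n` whose position `2i` is white and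
carries `wht` with the six letters of `uᵢ`, and whose position `2i + 1` is its shadow, carrying
`shdw` with the tildes of the same six letters; this pairing makes every transfer formula hold.
At a white position `2k` the formula `Half([wht ∧ α] ∨ [shdw ∧ ¬β̃])` counts the `α`'s among the
first `k` white positions plus the non-`β`'s among the first `k` shadows, so it holds iff `α` and
`β` occur equally often before step `k`. Hence `ψ_P3` says that a state `q ≠ q₀` that is not
current at step `k` has been entered as often as it was left, which follows from (P1) and (P3),
and `ψ_P4` says that a counter flagged zero has seen as many increments as decrements, which is
(P4).
-/

section Semantics

variable {w : Word} {i : ℕ} {φ ψ : Formula}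

@[simp] lemma sat_atom {a : ℕ} : Sat w i (.atom a) ↔ a ∈ w.getD i ∅ := Iff.rfl
@[simp] lemma sat_neg : Sat w i (.neg φ) ↔ ¬ Sat w i φ := Iff.rfl
@[simp] lemma sat_conj : Sat w i (.conj φ ψ) ↔ Sat w i φ ∧ Sat w i ψ := Iff.rfl

lemma sat_fut : Sat w i (.fut φ) ↔ ∃ j, i ≤ j ∧ j < w.length ∧ Sat w j φ := Iff.rfl

@[simp] lemma sat_fdisj : Sat w i (fdisj φ ψ) ↔ Sat w i φ ∨ Sat w i ψ := by
  simp only [fdisj, Sat]; tauto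

@[simp] lemma sat_fimpl : Sat w i (fimpl φ ψ) ↔ (Sat w i φ → Sat w i ψ) := by
  simp only [fimpl, sat_fdisj, Sat]; tauto

@[simp] lemma sat_fiff : Sat w i (fiff φ ψ) ↔ (Sat w i φ ↔ Sat w i ψ) := by
  simp only [fiff, sat_conj, sat_fimpl]; tauto

lemma sat_G : Sat w i (G φ) ↔ ∀ j, i ≤ j → j < w.length → Sat w j φ := by
  simp only [G, Sat]; push Not; rfl

lemma sat_bigConj {l : List Formula} : Sat w i (bigConj l) ↔ ∀ φ ∈ l, Sat w i φ := by
  induction l with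
  | nil => simp [bigConj, ftop, Sat]
  | cons φ l ih => simp [bigConj, ← ih]

lemma sat_bigDisj {l : List Formula} : Sat w i (bigDisj l) ↔ ∃ φ ∈ l, Sat w i φ := by
  induction l with
  | nil => simp [bigDisj, fbot, Sat]
  | cons φ l ih => simp [bigDisj, ← ih]

end Semantics

section Counting

variable (p : ℕ → Prop) [DecidablePred p]

lemma _root_.Nat.ncard_setOf_lt_and_eq_count (n : ℕ) : {j | j < n ∧ p j}.ncard = Nat.count p n := by
  rw [Nat.count_eq_card_filter_range, ← Set.ncard_coe_finset]
  congr 1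
  ext j
  simp

lemma _root_.Nat.count_two_mul (k : ℕ) :
    Nat.count p (2 * k) =
      Nat.count (fun i => p (2 * i)) k + Nat.count (fun i => p (2 * i + 1)) k := by
  induction k with
  | zero => simp
  | succ k ih =>
    rw [show 2 * (k + 1) = 2 * k + 1 + 1 by ring, Nat.count_succ, Nat.count_succ, ih,
      Nat.count_succ, Nat.count_succ]
    ring

lemma _root_.Nat.count_add_count_not (k : ℕ) : Nat.count p k + Nat.count (fun i => ¬ p i) k = k := by
  induction k with
  | zero => simp
  | succ k ih => by_cases h : p k <;> simp [Nat.count_succ, h] <;> omega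

variable {p}

lemma _root_.Nat.count_congr_of_lt {q : ℕ → Prop} [DecidablePred q] {n : ℕ}
    (h : ∀ k < n, p k ↔ q k) : Nat.count p n = Nat.count q n :=
  le_antisymm (Nat.count_mono_left fun k hk => (h k hk).1)
    (Nat.count_mono_left fun k hk => (h k hk).2)

variable {w : Word} {φ : Formula} {k : ℕ}

open Classical in
lemma sat_half_two_mul :
    Sat w (2 * k) (.half φ) ↔
      Nat.count (fun i => Sat w (2 * i) φ) k + Nat.count (fun i => Sat w (2 * i + 1) φ) k = k := by
  rw [Sat, Nat.ncard_setOf_lt_and_eq_count, Nat.count_two_mul]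
  omega

lemma not_sat_half_two_mul_add_one : ¬ Sat w (2 * k + 1) (.half φ) := by
  rw [Sat]
  omega

end Counting

section Runs

variable {M : Minsky Q} {u : List (Config Q)}

open Classical in
lemma count_q_succ_eq_count_qn (h1 : P1 M u) (h3 : P3 M u) {q : Q} (hq : q ≠ M.q0) {k : ℕ}
    (hk : k < u.length) :
    Nat.count (fun i => (u.getD i (dflt M)).q = q) (k + 1) =
      Nat.count (fun i => (u.getD i (dflt M)).qn = q) k := by
  induction k with
  | zero => simp only [Nat.count_succ, Nat.count_zero, h1.1, if_neg hq.symm]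
  | succ k ih => rw [Nat.count_succ, ih (by omega), Nat.count_succ, h3 k hk]

lemma sum_opVal_eq_zero_iff (o : ℕ → Op) (k : ℕ) :
    ∑ i ∈ Finset.range k, opVal (o i) = 0 ↔
      Nat.count (fun i => o i = .inc) k = Nat.count (fun i => o i = .dec) k := by
  suffices ∑ i ∈ Finset.range k, opVal (o i) =
      Nat.count (fun i => o i = .inc) k - (Nat.count (fun i => o i = .dec) k : ℤ) by
    omega
  induction k with
  | zero => simp
  | succ k ih =>
    rw [Finset.sum_range_succ, ih, Nat.count_succ, Nat.count_succ]
    cases o k <;> simp [opVal] <;> ring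

end Runs

lemma nodup_tagList [Fintype Q] : (tagList Q).Nodup := by
  have hQ := Finset.nodup_toList (Finset.univ : Finset Q)
  simp [tagList, List.nodup_append, cvList, opList, hQ.map fun _ _ => Tag.fr.inj,
    hQ.map fun _ _ => Tag.to.inj, or_imp, forall_and]

def Config.tags (c : Config Q) : List (Tag Q) :=
  [.fr c.q, .c1 c.f, .c2 c.s, .i1 c.fo, .i2 c.so, .to c.qn]

namespace Config

variable {c : Config Q}

@[simp] lemma fr_mem_tags {q : Q} : Tag.fr q ∈ c.tags ↔ c.q = q := by simp [tags, eq_comm]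
@[simp] lemma to_mem_tags {q : Q} : Tag.to q ∈ c.tags ↔ c.qn = q := by simp [tags, eq_comm]
@[simp] lemma c1_mem_tags {v : CV} : Tag.c1 v ∈ c.tags ↔ c.f = v := by simp [tags, eq_comm]
@[simp] lemma c2_mem_tags {v : CV} : Tag.c2 v ∈ c.tags ↔ c.s = v := by simp [tags, eq_comm]
@[simp] lemma i1_mem_tags {o : Op} : Tag.i1 o ∈ c.tags ↔ c.fo = o := by simp [tags, eq_comm]
@[simp] lemma i2_mem_tags {o : Op} : Tag.i2 o ∈ c.tags ↔ c.so = o := by simp [tags, eq_comm]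

end Config

namespace Letters

variable (L : Letters Q) (c : Config Q)

def whiteLabel : Set ℕ := insert L.wht {a | ∃ t ∈ c.tags, L.ltr t = a}

def shadowLabel : Set ℕ := insert L.shdw {a | ∃ t ∈ c.tags, L.tilde (L.ltr t) = a}

variable {L c}

@[simp] lemma tilde_ltr_inj {t t' : Tag Q} :
    L.tilde (L.ltr t) = L.tilde (L.ltr t') ↔ t = t' :=
  ⟨fun h => L.ltr_inj (L.tilde_inj _ _ h), fun h => h ▸ rfl⟩

@[simp] lemma wht_mem_whiteLabel : L.wht ∈ L.whiteLabel c := Set.mem_insert _ _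

@[simp] lemma shdw_mem_shadowLabel : L.shdw ∈ L.shadowLabel c := Set.mem_insert _ _

@[simp] lemma shdw_not_mem_whiteLabel : L.shdw ∉ L.whiteLabel c := by
  simp [whiteLabel, L.wht_ne_shdw.symm, L.ltr_ne_shdw]

@[simp] lemma wht_not_mem_shadowLabel : L.wht ∉ L.shadowLabel c := by
  simp [shadowLabel, L.wht_ne_shdw, L.tilde_ne_wht]

@[simp] lemma ltr_mem_whiteLabel {t : Tag Q} : L.ltr t ∈ L.whiteLabel c ↔ t ∈ c.tags := by
  simp [whiteLabel, L.ltr_ne_wht, L.ltr_inj.eq_iff]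

@[simp] lemma ltr_not_mem_shadowLabel {t : Tag Q} : L.ltr t ∉ L.shadowLabel c := by
  simp [shadowLabel, L.ltr_ne_shdw, L.tilde_ne_ltr]

@[simp] lemma tilde_not_mem_whiteLabel {t : Tag Q} : L.tilde (L.ltr t) ∉ L.whiteLabel c := by
  simp [whiteLabel, L.tilde_ne_wht, fun t' => (L.tilde_ne_ltr t t').symm]

@[simp] lemma tilde_mem_shadowLabel {t : Tag Q} :
    L.tilde (L.ltr t) ∈ L.shadowLabel c ↔ t ∈ c.tags := by
  simp [shadowLabel, L.tilde_ne_shdw]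

lemma decodes_whiteLabel : Decodes L c (L.whiteLabel c) := by
  simp [Decodes]

end Letters

def encoding (M : Minsky Q) (L : Letters Q) (u : List (Config Q)) : Word :=
  (List.range (2 * u.length)).map fun j =>
    if j % 2 = 0 then L.whiteLabel (u.getD (j / 2) (dflt M))
    else L.shadowLabel (u.getD (j / 2) (dflt M))

section Encoding

variable {M : Minsky Q} {L : Letters Q} {u : List (Config Q)} {j : ℕ}

@[simp] lemma length_encoding : (encoding M L u).length = 2 * u.length := by
  simp [encoding]

lemma encoding_getD (hj : j < 2 * u.length) :
    (encoding M L u).getD j ∅ =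
      if j % 2 = 0 then L.whiteLabel (u.getD (j / 2) (dflt M))
      else L.shadowLabel (u.getD (j / 2) (dflt M)) := by
  simp [encoding, List.getD_eq_getElem?_getD, hj]

lemma encodesRun_encoding : EncodesRun L (encoding M L u) u := by
  refine ⟨length_encoding.symm, fun i hi => ?_⟩
  rw [encoding_getD (by omega), if_pos (by omega), Nat.mul_div_cancel_left i two_pos,
    List.getD_eq_getElem _ _ hi]
  exact Letters.decodes_whiteLabel

lemma sat_wht (hj : j < 2 * u.length) : Sat (encoding M L u) j (.atom L.wht) ↔ j % 2 = 0 := by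
  rw [sat_atom, encoding_getD hj]
  split_ifs with h <;> simp [h]

lemma sat_shdw (hj : j < 2 * u.length) : Sat (encoding M L u) j (.atom L.shdw) ↔ j % 2 = 1 := by
  rw [sat_atom, encoding_getD hj]
  split_ifs with h <;> simp [h]
  omega

lemma sat_ltr (hj : j < 2 * u.length) {t : Tag Q} :
    Sat (encoding M L u) j (.atom (L.ltr t)) ↔
      j % 2 = 0 ∧ t ∈ (u.getD (j / 2) (dflt M)).tags := by
  rw [sat_atom, encoding_getD hj]
  split_ifs with h <;> simp [h]

lemma sat_tilde (hj : j < 2 * u.length) {t : Tag Q} :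
    Sat (encoding M L u) j (.atom (L.tilde (L.ltr t))) ↔
      j % 2 = 1 ∧ t ∈ (u.getD (j / 2) (dflt M)).tags := by
  rw [sat_atom, encoding_getD hj]
  split_ifs with h <;> simp [h]
  omega

lemma sat_ltr_two_mul {k : ℕ} (hk : k < u.length) {t : Tag Q} :
    Sat (encoding M L u) (2 * k) (.atom (L.ltr t)) ↔ t ∈ (u.getD k (dflt M)).tags := by
  rw [sat_ltr (by omega)]
  simp

lemma sat_G_wht_imp {φ : Formula} (h : ∀ k < u.length, Sat (encoding M L u) (2 * k) φ) :
    Sat (encoding M L u) 0 (G (fimpl (.atom L.wht) φ)) := by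
  rw [sat_G, length_encoding]
  intro j _ hj
  rw [sat_fimpl, sat_wht hj]
  intro hw
  obtain ⟨k, rfl⟩ : ∃ k, j = 2 * k := ⟨j / 2, by omega⟩
  exact h k (by omega)

lemma sat_G_ltr_imp {φ : Formula} {t : Tag Q}
    (h : ∀ k < u.length, t ∈ (u.getD k (dflt M)).tags → Sat (encoding M L u) (2 * k) φ) :
    Sat (encoding M L u) 0 (G (fimpl (.atom (L.ltr t)) φ)) := by
  rw [sat_G, length_encoding]
  intro j _ hj
  rw [sat_fimpl, sat_ltr hj]
  rintro ⟨hw, ht⟩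
  obtain ⟨k, rfl⟩ : ∃ k, j = 2 * k := ⟨j / 2, by omega⟩
  exact h k (by omega) (by simpa using ht)

open Classical in
lemma sat_half_wht (hj : j < 2 * u.length) :
    Sat (encoding M L u) j (.half (.atom L.wht)) ↔ j % 2 = 0 := by
  obtain ⟨k, rfl | rfl⟩ : ∃ k, j = 2 * k ∨ j = 2 * k + 1 := ⟨j / 2, by omega⟩
  · rw [sat_half_two_mul]
    have hw : ∀ i < k, Sat (encoding M L u) (2 * i) (.atom L.wht) := fun i hi =>
      (sat_wht (by omega)).2 (by omega)
    have hs : ∀ i < k, ¬ Sat (encoding M L u) (2 * i + 1) (.atom L.wht) := fun i hi h =>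
      absurd ((sat_wht (by omega)).1 h) (by omega)
    rw [Nat.count_of_forall hw, Nat.count_of_forall_not hs]
    omega
  · simpa using not_sat_half_two_mul_add_one

open Classical in
lemma sat_φeq_two_mul {k : ℕ} (hk : k ≤ u.length) (α β : Tag Q) :
    Sat (encoding M L u) (2 * k) (φeq L (L.ltr α) (L.ltr β)) ↔
      Nat.count (fun i => α ∈ (u.getD i (dflt M)).tags) k =
        Nat.count (fun i => β ∈ (u.getD i (dflt M)).tags) k := by
  rw [φeq, sat_half_two_mul]
  have hw : ∀ i < k, Sat (encoding M L u) (2 * i)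
      (fdisj (.conj (.atom L.wht) (.atom (L.ltr α)))
        (.conj (.atom L.shdw) (.neg (.atom (L.tilde (L.ltr β)))))) ↔
      α ∈ (u.getD i (dflt M)).tags := fun i hi => by
    have hj : 2 * i < 2 * u.length := by omega
    simp only [sat_fdisj, sat_conj, sat_neg, sat_wht hj, sat_shdw hj, sat_ltr hj, sat_tilde hj]
    simp
  have hs : ∀ i < k, Sat (encoding M L u) (2 * i + 1)
      (fdisj (.conj (.atom L.wht) (.atom (L.ltr α)))
        (.conj (.atom L.shdw) (.neg (.atom (L.tilde (L.ltr β)))))) ↔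
      β ∉ (u.getD i (dflt M)).tags := fun i hi => by
    have hj : 2 * i + 1 < 2 * u.length := by omega
    simp only [sat_fdisj, sat_conj, sat_neg, sat_wht hj, sat_shdw hj, sat_ltr hj, sat_tilde hj]
    simp [Nat.add_div_of_dvd_right]
  rw [Nat.count_congr_of_lt hw, Nat.count_congr_of_lt hs]
  have := Nat.count_add_count_not (fun i => β ∈ (u.getD i (dflt M)).tags) k
  omega

lemma sat_φlast (hj : j < 2 * u.length) :
    Sat (encoding M L u) j (φlast L.shdw) ↔ j = 2 * u.length - 1 := by
  rw [φlast, sat_G, length_encoding]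
  constructor
  · intro h
    by_contra hne
    have h' := h (2 * ((j + 1) / 2)) (by omega) (by omega)
    rw [sat_shdw (by omega)] at h'
    omega
  · rintro rfl j' hj' hlt
    rw [sat_shdw hlt]
    omega

lemma sat_φstl (hj : j < 2 * u.length) :
    Sat (encoding M L u) j (φstl L.wht L.shdw) ↔ j = 2 * u.length - 2 := by
  rw [φstl, sat_conj, sat_G, length_encoding, sat_wht hj]
  constructor
  · rintro ⟨hw, h⟩
    by_contra hne
    have h' := h (j + 1) (by omega) (by omega)
    rw [sat_fdisj, sat_wht (by omega), sat_φlast (by omega)] at h'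
    omega
  · rintro rfl
    refine ⟨by omega, fun j' hj' hlt => ?_⟩
    rw [sat_fdisj, sat_wht hlt, sat_φlast hlt]
    omega

lemma sat_ψshadowy (hn : u ≠ []) : Sat (encoding M L u) 0 (ψshadowy L.wht L.shdw) := by
  have hn' : 0 < u.length := List.length_pos_iff.2 hn
  refine ⟨⟨(sat_wht (by omega)).2 rfl, ?_, ?_⟩, ?_⟩
  · rw [sat_G, length_encoding]
    intro j _ hj
    rw [sat_fiff, sat_neg, sat_wht hj, sat_shdw hj]
    omega
  · refine sat_G_wht_imp fun k hk => ⟨2 * k + 1, by omega, by simp; omega, ?_⟩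
    rw [sat_shdw (by omega)]
    omega
  · rw [sat_G, length_encoding]
    intro j _ hj
    rw [sat_fiff, sat_half_wht hj, sat_wht hj]

lemma sat_fut_φstl_conj_ltr (hn : u ≠ []) {t : Tag Q} :
    Sat (encoding M L u) 0 (.fut (.conj (φstl L.wht L.shdw) (.atom (L.ltr t)))) ↔
      t ∈ (u.getD (u.length - 1) (dflt M)).tags := by
  have hn' : 0 < u.length := List.length_pos_iff.2 hn
  have hj : 2 * u.length - 2 < 2 * u.length := by omega
  rw [sat_fut, length_encoding]
  constructor
  · rintro ⟨j, -, hj, hstl, hσ⟩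
    rw [sat_φstl hj] at hstl
    subst hstl
    rw [sat_ltr hj, show (2 * u.length - 2) / 2 = u.length - 1 by omega] at hσ
    exact hσ.2
  · intro ht
    refine ⟨2 * u.length - 2, by omega, hj, (sat_φstl hj).2 rfl, ?_⟩
    rw [sat_ltr hj, show (2 * u.length - 2) / 2 = u.length - 1 by omega]
    exact ⟨by omega, ht⟩

lemma sat_fut_φlast_conj_tilde (hn : u ≠ []) {t : Tag Q} :
    Sat (encoding M L u) 0 (.fut (.conj (φlast L.shdw) (.atom (L.tilde (L.ltr t))))) ↔
      t ∈ (u.getD (u.length - 1) (dflt M)).tags := by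
  have hn' : 0 < u.length := List.length_pos_iff.2 hn
  have hj : 2 * u.length - 1 < 2 * u.length := by omega
  rw [sat_fut, length_encoding]
  constructor
  · rintro ⟨j, -, hj, hlast, hσ⟩
    rw [sat_φlast hj] at hlast
    subst hlast
    rw [sat_tilde hj, show (2 * u.length - 1) / 2 = u.length - 1 by omega] at hσ
    exact hσ.2
  · intro ht
    refine ⟨2 * u.length - 1, by omega, hj, (sat_φlast hj).2 rfl, ?_⟩
    rw [sat_tilde hj, show (2 * u.length - 1) / 2 = u.length - 1 by omega]
    exact ⟨by omega, ht⟩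

lemma sat_φtransfer (hn : u ≠ []) (t : Tag Q) :
    Sat (encoding M L u) 0 (φtransfer L.wht L.shdw (L.ltr t) (L.tilde (L.ltr t))) := by
  refine ⟨sat_ψshadowy hn, ?_, ?_, sat_G_wht_imp fun k hk => (sat_φeq_two_mul hk.le t t).2 rfl,
    ?_⟩
  · rw [sat_G, length_encoding]
    intro j _ hj
    rw [sat_fimpl, sat_ltr hj, sat_wht hj]
    exact And.left
  · rw [sat_G, length_encoding]
    intro j _ hj
    rw [sat_fimpl, sat_tilde hj, sat_shdw hj]
    exact And.left
  · rw [sat_fiff, sat_fut_φstl_conj_ltr hn, sat_fut_φlast_conj_tilde hn]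

lemma sat_ψtruly [Fintype Q] (hn : u ≠ []) : Sat (encoding M L u) 0 (ψtruly L) := by
  rw [ψtruly, sat_bigConj]
  rintro φ (_ | ⟨_, hφ⟩)
  · exact sat_ψshadowy hn
  · obtain ⟨_, hσ, rfl⟩ := List.mem_map.1 hφ
    obtain ⟨t, -, rfl⟩ := List.mem_map.1 hσ
    exact sat_φtransfer hn t

lemma sat_ψP1 (hn : u ≠ []) (h1 : P1 M u) : Sat (encoding M L u) 0 (ψP1 M L) := by
  have hn' : 0 < u.length := List.length_pos_iff.2 hn
  obtain ⟨hq, hf, hs⟩ := h1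
  exact ⟨(sat_ltr_two_mul (k := 0) hn').2 (by simpa using hq),
    (sat_ltr_two_mul (k := 0) hn').2 (by simpa using hf),
    (sat_ltr_two_mul (k := 0) hn').2 (by simpa using hs)⟩

lemma sat_ψP2a [Fintype Q] (h2 : P2 M u) : Sat (encoding M L u) 0 (ψP2a M L) := by
  refine sat_G_wht_imp fun k hk => ?_
  have hδ := h2 k hk
  have hsat (t : Tag Q) := sat_ltr_two_mul (M := M) (L := L) hk (t := t)
  generalize u.getD k (dflt M) = c at hδ hsat
  have mem_cvList (v : CV) : v ∈ cvList := by cases v <;> simp [cvList]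
  rw [sat_bigDisj]
  refine ⟨_, List.mem_flatMap.2 ⟨c.q, by simp, List.mem_flatMap.2 ⟨c.f, mem_cvList _,
    List.mem_map.2 ⟨c.s, mem_cvList _, rfl⟩⟩⟩, ?_⟩
  simp [sat_bigConj, hsat, hδ]

lemma sat_ψP2b [Fintype Q] : Sat (encoding M L u) 0 (ψP2b L) := by
  rw [ψP2b, sat_G, length_encoding]
  intro j _ hj
  rw [sat_bigConj]
  intro φ hφ
  obtain ⟨l, hl, rfl⟩ := List.mem_map.1 hφ
  rw [List.mem_sublistsLen] at hl
  rw [sat_neg, sat_bigConj]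
  intro hall
  have hsub : l ⊆ (u.getD (j / 2) (dflt M)).tags.map L.ltr := by
    intro a ha
    obtain ⟨t, -, rfl⟩ := List.mem_map.1 (hl.1.subset ha)
    exact List.mem_map_of_mem ((sat_ltr hj).1 (hall _ (List.mem_map_of_mem ha))).2
  have hnodup : l.Nodup := hl.1.nodup (nodup_tagList.map L.ltr_inj)
  have := (hnodup.subperm hsub).length_le
  simp [Config.tags, hl.2] at this

lemma sat_ψP3 [Fintype Q] [DecidableEq Q] (h1 : P1 M u) (h3 : P3 M u) :
    Sat (encoding M L u) 0 (ψP3 M L) := by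
  classical
  refine sat_G_wht_imp fun k hk => ?_
  rw [sat_bigConj]
  intro φ hφ
  obtain ⟨q, hq, rfl⟩ := List.mem_map.1 hφ
  have hq0 : q ≠ M.q0 := by simpa using (List.mem_filter.1 hq).2
  rw [sat_fdisj, sat_ltr_two_mul hk, sat_φeq_two_mul hk.le, Config.fr_mem_tags]
  by_cases hqk : (u.getD k (dflt M)).q = q
  · exact Or.inl hqk
  · right
    have := count_q_succ_eq_count_qn h1 h3 hq0 hk
    rw [Nat.count_succ, if_neg hqk] at this
    simpa using this

lemma sat_ψP4 (h4 : P4 M u) : Sat (encoding M L u) 0 (ψP4 L) := by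
  have hzero (v : CV) : v = .zero ↔ ¬ v = .plus := by cases v <;> simp
  refine ⟨sat_G_ltr_imp fun k hk hf => ?_, sat_G_ltr_imp fun k hk hs => ?_,
    sat_G_wht_imp fun k hk => ?_, sat_G_wht_imp fun k hk => ?_⟩
  · rw [sat_φeq_two_mul hk.le]
    simpa [sum_opVal_eq_zero_iff] using (h4 k hk).1.1 (by simpa using hf)
  · rw [sat_φeq_two_mul hk.le]
    simpa [sum_opVal_eq_zero_iff] using (h4 k hk).2.1 (by simpa using hs)
  · simp only [sat_fiff, sat_neg, sat_ltr_two_mul hk, Config.c1_mem_tags, hzero]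
  · simp only [sat_fiff, sat_neg, sat_ltr_two_mul hk, Config.c2_mem_tags, hzero]

end Encoding

theorem run_has_encoding_word [Fintype Q] [DecidableEq Q]
    (M : Minsky Q) (L : Letters Q) (u : List (Config Q)) (hu : IsRun M u) :
    ∃ w : Word, Sat w 0 (ψMinsky M L) ∧ EncodesRun L w u := by
  obtain ⟨hne, h1, h2, h3, h4⟩ := hu
  refine ⟨encoding M L u, ⟨?_, sat_ψP3 h1 h3, sat_ψP4 h4⟩, encodesRun_encoding⟩
  exact ⟨sat_ψtruly hne, sat_ψP1 hne h1, sat_ψP2a h2, sat_ψP2b⟩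

end Minsky15
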